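/- Let f : ℍ → ℍ be ℝ-differentiable at q. Then the real Fréchet derivative of f at q applied to any increment h ∈ ℍ satisfies Df(q)[h] = Σ_{μ∈{1,i,j,k}} (∂f/∂q^μ)(q) · (μ h μ⁻¹) and also Df(q)[h] = Σ_{μ∈{1,i,j,k}} (∂f/∂q^{μ*})(q) · (μ h μ⁻¹)^{*}. -/

import Mathlib

/-! Conjugation `x ↦ x^μ = μ x μ⁻¹` is multiplicative, so `(∂f/∂q^μ) h^μ` is `¼` times
`Df(q)[1] h^μ − Σ_e Df(q)[e] (e h)^μ` (`e ∈ {i, j, k}`). Summing over `μ ∈ {1, i, j, k}` and using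
`Σ_μ x^μ = 4 Re x` together with `Re (e h) = −h_e` leaves `Σ h_e Df(q)[e] = Df(q)[h]`. Since
`(h^μ)* = (h*)^μ`, the conjugate derivatives reduce to the same computation applied to `h*`. -/

open scoped Quaternion

noncomputable section

/-- The imaginary unit `i` of the quaternions. -/
def qI : ℍ[ℝ] := ⟨0, 1, 0, 0⟩
/-- The imaginary unit `j` of the quaternions. -/
def qJ : ℍ[ℝ] := ⟨0, 0, 1, 0⟩
/-- The imaginary unit `k` of the quaternions. -/
def qK : ℍ[ℝ] := ⟨0, 0, 0, 1⟩

/-- Left GHR derivative `∂f/∂q^μ` of a quaternion function of a quaternion variable: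
`¼(∂f/∂q_a − (∂f/∂q_b) i^μ − (∂f/∂q_c) j^μ − (∂f/∂q_d) k^μ)`, with `x^μ = μ x μ⁻¹`, the
partials being the real directional (Fréchet) derivatives in directions `1, i, j, k`. -/
def ghrS (μ : ℍ[ℝ]) (f : ℍ[ℝ] → ℍ[ℝ]) (q : ℍ[ℝ]) : ℍ[ℝ] :=
  (1 / 4 : ℝ) • (fderiv ℝ f q 1 - fderiv ℝ f q qI * (μ * qI * μ⁻¹)
    - fderiv ℝ f q qJ * (μ * qJ * μ⁻¹) - fderiv ℝ f q qK * (μ * qK * μ⁻¹))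

/-- Conjugate left GHR derivative `∂f/∂q^{μ*}` of a quaternion function of a quaternion
variable. -/
def ghrSStar (μ : ℍ[ℝ]) (f : ℍ[ℝ] → ℍ[ℝ]) (q : ℍ[ℝ]) : ℍ[ℝ] :=
  (1 / 4 : ℝ) • (fderiv ℝ f q 1 + fderiv ℝ f q qI * (μ * qI * μ⁻¹)
    + fderiv ℝ f q qJ * (μ * qJ * μ⁻¹) + fderiv ℝ f q qK * (μ * qK * μ⁻¹))

open Quaternion

@[simp] lemma re_qI : qI.re = 0 := rfl
@[simp] lemma imI_qI : qI.imI = 1 := rfl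
@[simp] lemma imJ_qI : qI.imJ = 0 := rfl
@[simp] lemma imK_qI : qI.imK = 0 := rfl
@[simp] lemma re_qJ : qJ.re = 0 := rfl
@[simp] lemma imI_qJ : qJ.imI = 0 := rfl
@[simp] lemma imJ_qJ : qJ.imJ = 1 := rfl
@[simp] lemma imK_qJ : qJ.imK = 0 := rfl
@[simp] lemma re_qK : qK.re = 0 := rfl
@[simp] lemma imI_qK : qK.imI = 0 := rfl
@[simp] lemma imJ_qK : qK.imJ = 0 := rfl
@[simp] lemma imK_qK : qK.imK = 1 := rfl

lemma qI_ne_zero : qI ≠ 0 := fun h => by simpa using congrArg QuaternionAlgebra.imI h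
lemma qJ_ne_zero : qJ ≠ 0 := fun h => by simpa using congrArg QuaternionAlgebra.imJ h
lemma qK_ne_zero : qK ≠ 0 := fun h => by simpa using congrArg QuaternionAlgebra.imK h

lemma qI_inv : qI⁻¹ = -qI :=
  inv_eq_of_mul_eq_one_right <| by ext <;> simp [re_mul, imI_mul, imJ_mul, imK_mul]

lemma qJ_inv : qJ⁻¹ = -qJ :=
  inv_eq_of_mul_eq_one_right <| by ext <;> simp [re_mul, imI_mul, imJ_mul, imK_mul]

lemma qK_inv : qK⁻¹ = -qK :=
  inv_eq_of_mul_eq_one_right <| by ext <;> simp [re_mul, imI_mul, imJ_mul, imK_mul]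

lemma re_qI_mul (x : ℍ[ℝ]) : (qI * x).re = -x.imI := by simp [re_mul]
lemma re_qJ_mul (x : ℍ[ℝ]) : (qJ * x).re = -x.imJ := by simp [re_mul]
lemma re_qK_mul (x : ℍ[ℝ]) : (qK * x).re = -x.imK := by simp [re_mul]

lemma map_eq_re_smul_add_imI_smul_add_imJ_smul_add_imK_smul {M F : Type*} [AddCommMonoid M]
    [Module ℝ M] [FunLike F ℍ[ℝ] M] [LinearMapClass F ℝ ℍ[ℝ] M] (L : F) (h : ℍ[ℝ]) :
    L h = h.re • L 1 + h.imI • L qI + h.imJ • L qJ + h.imK • L qK := by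
  have hh : h = h.re • 1 + h.imI • qI + h.imJ • qJ + h.imK • qK := by ext <;> simp
  conv_lhs => rw [hh]
  simp only [map_add, map_smul]

lemma conj_mul_conj {R : Type*} [DivisionRing R] {μ : R} (hμ : μ ≠ 0) (a b : R) :
    μ * a * μ⁻¹ * (μ * b * μ⁻¹) = μ * (a * b) * μ⁻¹ := by
  simp only [mul_assoc, inv_mul_cancel_left₀ hμ]

lemma Quaternion.star_conj (μ x : ℍ[ℝ]) : star (μ * x * μ⁻¹) = μ * star x * μ⁻¹ := by
  simp only [inv_def, star_mul, star_smul, star_star, mul_smul_comm, mul_assoc]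

def conjSum (x : ℍ[ℝ]) : ℍ[ℝ] := x + qI * x * qI⁻¹ + qJ * x * qJ⁻¹ + qK * x * qK⁻¹

lemma conjSum_eq (x : ℍ[ℝ]) : conjSum x = (4 * x.re : ℝ) := by
  rw [conjSum, qI_inv, qJ_inv, qK_inv]
  ext <;> simp [re_mul, imI_mul, imJ_mul, imK_mul]; ring

def ghrCombination (A B C D μ : ℍ[ℝ]) : ℍ[ℝ] :=
  (1 / 4 : ℝ) • (A + B * (μ * qI * μ⁻¹) + C * (μ * qJ * μ⁻¹) + D * (μ * qK * μ⁻¹))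

lemma ghrCombination_mul_conj (A B C D : ℍ[ℝ]) {μ : ℍ[ℝ]} (hμ : μ ≠ 0) (x : ℍ[ℝ]) :
    ghrCombination A B C D μ * (μ * x * μ⁻¹) = (1 / 4 : ℝ) • (A * (μ * x * μ⁻¹)
      + B * (μ * (qI * x) * μ⁻¹) + C * (μ * (qJ * x) * μ⁻¹) + D * (μ * (qK * x) * μ⁻¹)) := by
  simp only [ghrCombination, smul_mul_assoc, add_mul, mul_assoc _ (μ * _ * μ⁻¹),
    conj_mul_conj hμ]

lemma sum_ghrCombination_mul_conj (A B C D x : ℍ[ℝ]) :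
    ghrCombination A B C D 1 * (1 * x * 1⁻¹) + ghrCombination A B C D qI * (qI * x * qI⁻¹)
      + ghrCombination A B C D qJ * (qJ * x * qJ⁻¹) + ghrCombination A B C D qK * (qK * x * qK⁻¹)
      = x.re • A + (qI * x).re • B + (qJ * x).re • C + (qK * x).re • D := by
  rw [ghrCombination_mul_conj A B C D one_ne_zero, ghrCombination_mul_conj A B C D qI_ne_zero,
    ghrCombination_mul_conj A B C D qJ_ne_zero, ghrCombination_mul_conj A B C D qK_ne_zero]
  calc _ = (1 / 4 : ℝ) • (A * conjSum x + B * conjSum (qI * x) + C * conjSum (qJ * x)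
        + D * conjSum (qK * x)) := by
        simp only [conjSum, one_mul, mul_one, inv_one, mul_add, smul_add]; abel
    _ = _ := by
        simp only [conjSum_eq, mul_coe_eq_smul]; module

lemma ghrS_eq_ghrCombination (μ : ℍ[ℝ]) (f : ℍ[ℝ] → ℍ[ℝ]) (q : ℍ[ℝ]) :
    ghrS μ f q = ghrCombination (fderiv ℝ f q 1) (-fderiv ℝ f q qI) (-fderiv ℝ f q qJ)
      (-fderiv ℝ f q qK) μ := by
  simp only [ghrS, ghrCombination, neg_mul, ← sub_eq_add_neg]

lemma ghrSStar_eq_ghrCombination (μ : ℍ[ℝ]) (f : ℍ[ℝ] → ℍ[ℝ]) (q : ℍ[ℝ]) :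
    ghrSStar μ f q = ghrCombination (fderiv ℝ f q 1) (fderiv ℝ f q qI) (fderiv ℝ f q qJ)
      (fderiv ℝ f q qK) μ := rfl

theorem fderiv_eq_ghr_sum_general (f : ℍ[ℝ] → ℍ[ℝ]) (q : ℍ[ℝ]) :
    ∀ h : ℍ[ℝ],
      fderiv ℝ f q h =
          ghrS (1 : ℍ[ℝ]) f q * ((1 : ℍ[ℝ]) * h * (1 : ℍ[ℝ])⁻¹)
            + ghrS qI f q * (qI * h * qI⁻¹)
            + ghrS qJ f q * (qJ * h * qJ⁻¹)
            + ghrS qK f q * (qK * h * qK⁻¹)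
      ∧ fderiv ℝ f q h =
          ghrSStar (1 : ℍ[ℝ]) f q * star ((1 : ℍ[ℝ]) * h * (1 : ℍ[ℝ])⁻¹)
            + ghrSStar qI f q * star (qI * h * qI⁻¹)
            + ghrSStar qJ f q * star (qJ * h * qJ⁻¹)
            + ghrSStar qK f q * star (qK * h * qK⁻¹) := by
  intro h
  rw [map_eq_re_smul_add_imI_smul_add_imJ_smul_add_imK_smul (fderiv ℝ f q) h]
  constructor
  · simp only [ghrS_eq_ghrCombination, sum_ghrCombination_mul_conj, re_qI_mul, re_qJ_mul,
      re_qK_mul, smul_neg, neg_smul, neg_neg]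
  · simp only [ghrSStar_eq_ghrCombination, star_conj, sum_ghrCombination_mul_conj, re_qI_mul,
      re_qJ_mul, re_qK_mul, re_star, imI_star, imJ_star, imK_star, neg_neg]

/-- **The differential of a quaternion function via GHR derivatives** (equation (25)):
`Df(q)[h] = Σ_{μ∈{1,i,j,k}} (∂f/∂q^μ)(q) (μ h μ⁻¹)` and
`Df(q)[h] = Σ_{μ∈{1,i,j,k}} (∂f/∂q^{μ*})(q) (μ h μ⁻¹)*`. -/
theorem fderiv_eq_ghr_sum (f : ℍ[ℝ] → ℍ[ℝ]) (q : ℍ[ℝ]) (hf : DifferentiableAt ℝ f q) :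
    ∀ h : ℍ[ℝ],
      fderiv ℝ f q h =
          ghrS (1 : ℍ[ℝ]) f q * ((1 : ℍ[ℝ]) * h * (1 : ℍ[ℝ])⁻¹)
            + ghrS qI f q * (qI * h * qI⁻¹)
            + ghrS qJ f q * (qJ * h * qJ⁻¹)
            + ghrS qK f q * (qK * h * qK⁻¹)
      ∧ fderiv ℝ f q h =
          ghrSStar (1 : ℍ[ℝ]) f q * star ((1 : ℍ[ℝ]) * h * (1 : ℍ[ℝ])⁻¹)
            + ghrSStar qI f q * star (qI * h * qI⁻¹)
            + ghrSStar qJ f q * star (qJ * h * qJ⁻¹)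
            + ghrSStar qK f q * star (qK * h * qK⁻¹) :=
  fderiv_eq_ghr_sum_general f q
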